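/- arXiv:2111.15163 — 2 statements merged into one kernel-verified Lean document; each statement's English description precedes it below -/
import Mathlib

section
/- Grönwall bound for the energy under the growth condition (a priori estimate in the proof of Lemma 2.2): In the setting of the previous identity—g : ℝ^d → (symmetric positive-definite d×d real matrices) C¹, f, σ : ℝ^d → ℝ C¹, w : [0,T] → ℝ continuous, η ∈ ℝ, H₀(x,p) = ½⟨p, g(x)⁻¹p⟩ + f(x), and (x,p) : [0,T] → ℝ^d × ℝ^d a C¹ solution of x' = g(x)⁻¹p, p_i' = −½⟨p, ∂_i(g⁻¹)(x)p⟩ − ∂_i f(x) − η w ∂_i σ(x)—assume additionally that H₀(y,q) ≥ 0 for all (y,q) and that there exist constants C₁, c₁ > 0 such that |⟨g(y)⁻¹ q, ∇σ(y)⟩| ≤ C₁ + c₁ H₀(y,q) for all (y,q) ∈ ℝ^d × ℝ^d. Then for all t ∈ [0,T], H₀(x(t), p(t)) ≤ ( H₀(x(0), p(0)) + |η| C₁ ∫₀^t |w(s)| ds ) · exp( c₁ |η| ∫₀^t |w(s)| ds ). -/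
/-!
Along a solution the energy changes only through the forcing term: the unforced Hamiltonian
flow conserves `H₀` (the symmetry of `g⁻¹` makes the two quadratic terms of `dH₀/dt` combine),
so `dH₀/dt = -η w ⟨g⁻¹ p, ∇σ⟩ ≤ |w| (|η| C₁ + c₁ |η| H₀)` by the growth condition.
Grönwall's inequality with the time-dependent rate `|w|` then follows from the monotonicity of
`H₀ e^{-cK} - C K`, where `K(t) = ∫₀ᵗ |w|`, using `e^{-cK} ≤ 1`.
-/

/-- Partial derivative of a scalar function on `ℝ^d` in the `i`-th coordinate direction. -/
noncomputable def pdersc {d : ℕ} (i : Fin d) (ψ : (Fin d → ℝ) → ℝ) (y : Fin d → ℝ) : ℝ :=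
  fderiv ℝ ψ y (Pi.single i 1)

/-- The gradient of a scalar function on `ℝ^d`, as the vector of its partial derivatives. -/
noncomputable def gradVec {d : ℕ} (ψ : (Fin d → ℝ) → ℝ) (y : Fin d → ℝ) : Fin d → ℝ :=
  fun i => pdersc i ψ y

/-- Entrywise partial derivative of a matrix-valued function on `ℝ^d` in the `i`-th
coordinate direction. -/
noncomputable def pdermat {d : ℕ} (i : Fin d)
    (g : (Fin d → ℝ) → Matrix (Fin d) (Fin d) ℝ) (y : Fin d → ℝ) :
    Matrix (Fin d) (Fin d) ℝ :=
  Matrix.of fun j k => fderiv ℝ (fun z => g z j k) y (Pi.single i 1)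

/-- The mechanical Hamiltonian `H₀(y, q) = ½⟨q, g(y)⁻¹ q⟩ + f(y)`. -/
noncomputable def mechHam {d : ℕ} (g : (Fin d → ℝ) → Matrix (Fin d) (Fin d) ℝ)
    (f : (Fin d → ℝ) → ℝ) (y q : Fin d → ℝ) : ℝ :=
  (1 / 2) * dotProduct q ((g y)⁻¹.mulVec q) + f y

open Set Real Matrix

theorem le_mul_exp_integral_of_hasDerivAt_le {u u' k : ℝ → ℝ} {a b C c : ℝ}
    (hC : 0 ≤ C) (hc : 0 ≤ c) (hk : ContinuousOn k (Icc a b)) (hk₀ : ∀ t ∈ Icc a b, 0 ≤ k t)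
    (hu : ContinuousOn u (Icc a b)) (hu' : ∀ t ∈ Ioo a b, HasDerivAt u (u' t) t)
    (hbound : ∀ t ∈ Ioo a b, u' t ≤ k t * (C + c * u t)) :
    ∀ t ∈ Icc a b, u t ≤ (u a + C * ∫ s in a..t, k s) * exp (c * ∫ s in a..t, k s) := by
  set K : ℝ → ℝ := fun t => ∫ s in a..t, k s with hK_def
  have hK : ContinuousOn K (Icc a b) :=
    (intervalIntegral.continuousOn_primitive hk.integrableOn_Icc).congr
      fun t ht => intervalIntegral.integral_of_le ht.1
  have hK' : ∀ t ∈ Ioo a b, HasDerivAt K (k t) t := fun t ht =>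
    intervalIntegral.integral_hasDerivAt_right
      ((hk.mono (Icc_subset_Icc le_rfl ht.2.le)).intervalIntegrable_of_Icc ht.1.le)
      ((hk.mono Ioo_subset_Icc_self).stronglyMeasurableAtFilter isOpen_Ioo t ht)
      (hk.continuousAt (Icc_mem_nhds ht.1 ht.2))
  have hK₀ : ∀ t ∈ Icc a b, 0 ≤ K t := fun t ht =>
    intervalIntegral.integral_nonneg ht.1 fun s hs => hk₀ s ⟨hs.1, hs.2.trans ht.2⟩
  -- its derivative is at most `C k (e^{-cK} - 1) ≤ 0`
  have hanti : AntitoneOn (fun t => u t * exp (-(c * K t)) - C * K t) (Icc a b) := by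
    refine antitoneOn_of_hasDerivWithinAt_nonpos (convex_Icc a b)
      (f' := fun t => u' t * exp (-(c * K t)) + u t * (exp (-(c * K t)) * -(c * k t)) - C * k t)
      ((hu.mul ((hK.const_smul c).neg.rexp)).sub (hK.const_smul C)) ?_ ?_
    · rw [interior_Icc]
      intro t ht
      exact (((hu' t ht).mul ((hK' t ht).const_mul c).neg.exp).sub
        ((hK' t ht).const_mul C)).hasDerivWithinAt
    · rw [interior_Icc]
      intro t ht
      have hexp_le : exp (-(c * K t)) ≤ 1 :=
        exp_le_one_iff.mpr (neg_nonpos.mpr (mul_nonneg hc (hK₀ t (Ioo_subset_Icc_self ht))))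
      have hk_t := hk₀ t (Ioo_subset_Icc_self ht)
      nlinarith [mul_le_mul_of_nonneg_right (hbound t ht) (exp_pos (-(c * K t))).le,
        mul_le_mul_of_nonneg_left hexp_le (mul_nonneg hC hk_t)]
  intro t ht
  have hmono := hanti (left_mem_Icc.mpr (ht.1.trans ht.2)) ht ht.1
  simp only [hK_def, intervalIntegral.integral_same, mul_zero, neg_zero, exp_zero, mul_one,
    sub_zero] at hmono
  calc u t = u t * exp (-(c * K t)) * exp (c * K t) := by rw [mul_assoc, ← exp_add]; simp
    _ ≤ (u a + C * K t) * exp (c * K t) := by gcongr; linarith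

section MatrixInverse

variable {𝕜 E n : Type*} [NontriviallyNormedField 𝕜] [NormedAddCommGroup E]
  [NormedSpace 𝕜 E] [Fintype n] [DecidableEq n] {m : WithTop ℕ∞} {M : E → Matrix n n 𝕜}

theorem contDiff_det_of_contDiff_apply (hM : ∀ j k, ContDiff 𝕜 m fun y => M y j k) :
    ContDiff 𝕜 m fun y => (M y).det := by
  simp only [det_apply']
  exact ContDiff.sum fun τ _ => contDiff_const.mul (contDiff_prod fun i _ => hM (τ i) i)

theorem contDiff_inv_apply [CompleteSpace 𝕜] (hM : ∀ j k, ContDiff 𝕜 m fun y => M y j k)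
    (hdet : ∀ y, (M y).det ≠ 0) (j k : n) : ContDiff 𝕜 m fun y => (M y)⁻¹ j k := by
  have hadj : ContDiff 𝕜 m fun y => (M y).adjugate j k := by
    simp only [adjugate_apply]
    refine contDiff_det_of_contDiff_apply fun a b => ?_
    simp only [updateRow_apply]
    split_ifs
    · exact contDiff_const
    · exact hM a b
  have hinv : (fun y => (M y)⁻¹ j k) = fun y => ((M y).det)⁻¹ * (M y).adjugate j k := by
    funext y
    simp [inv_def, Ring.inverse_eq_inv']
  rw [hinv]
  exact ((contDiff_det_of_contDiff_apply hM).inv hdet).mul hadj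

end MatrixInverse

theorem hasDerivAt_dotProduct_mulVec {𝕜 n : Type*} [NontriviallyNormedField 𝕜] [Fintype n]
    {M : 𝕜 → Matrix n n 𝕜} {q : 𝕜 → n → 𝕜} {M' : Matrix n n 𝕜} {q' : n → 𝕜} {t : 𝕜}
    (hM : ∀ j k, HasDerivAt (fun s => M s j k) (M' j k) t) (hq : HasDerivAt q q' t) :
    HasDerivAt (fun s => q s ⬝ᵥ (M s *ᵥ q s))
      (q' ⬝ᵥ (M t *ᵥ q t) + q t ⬝ᵥ (M' *ᵥ q t) + q t ⬝ᵥ (M t *ᵥ q')) t := by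
  have hq_apply := hasDerivAt_pi.mp hq
  refine (HasDerivAt.fun_sum fun j _ => (hq_apply j).mul
    (HasDerivAt.fun_sum fun k _ => (hM j k).mul (hq_apply k))).congr_deriv ?_
  simp only [dotProduct, mulVec, Pi.mul_apply, ← Finset.sum_add_distrib, Finset.mul_sum]
  exact Finset.sum_congr rfl fun j _ => Finset.sum_congr rfl fun k _ => by ring

section Hamiltonian

variable {d : ℕ}

theorem fderiv_apply_eq_dotProduct_gradVec (ψ : (Fin d → ℝ) → ℝ) (y v : Fin d → ℝ) :
    fderiv ℝ ψ y v = v ⬝ᵥ gradVec ψ y := by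
  conv_lhs => rw [pi_eq_sum_univ' v]
  simp only [map_sum, map_smul, smul_eq_mul, dotProduct, gradVec, pdersc]

theorem hasDerivAt_comp_gradVec {ψ : (Fin d → ℝ) → ℝ} {x : ℝ → Fin d → ℝ} {x' : Fin d → ℝ}
    {t : ℝ} (hψ : DifferentiableAt ℝ ψ (x t)) (hx : HasDerivAt x x' t) :
    HasDerivAt (fun s => ψ (x s)) (x' ⬝ᵥ gradVec ψ (x t)) t := by
  simpa only [Function.comp_def, fderiv_apply_eq_dotProduct_gradVec]
    using hψ.hasFDerivAt.comp_hasDerivAt t hx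

variable {A : (Fin d → ℝ) → Matrix (Fin d) (Fin d) ℝ} {f : (Fin d → ℝ) → ℝ}
  {x p : ℝ → Fin d → ℝ} {x' p' : Fin d → ℝ} {t : ℝ}

theorem hasDerivAt_hamiltonian_comp (hA : ∀ j k, DifferentiableAt ℝ (fun z => A z j k) (x t))
    (hA_symm : (A (x t)).IsSymm) (hf : DifferentiableAt ℝ f (x t)) (hx : HasDerivAt x x' t)
    (hp : HasDerivAt p p' t) :
    HasDerivAt (fun s => 1 / 2 * p s ⬝ᵥ (A (x s) *ᵥ p s) + f (x s))
      (p' ⬝ᵥ (A (x t) *ᵥ p t)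
        + ∑ i, x' i * (1 / 2 * p t ⬝ᵥ (pdermat i A (x t) *ᵥ p t) + pdersc i f (x t))) t := by
  have hA_comp : ∀ j k, HasDerivAt (fun s => A (x s) j k)
      ((∑ i, x' i • pdermat i A (x t)) j k) t := fun j k =>
    (hasDerivAt_comp_gradVec (hA j k) hx).congr_deriv (by
      simp [Matrix.sum_apply, dotProduct, gradVec, pdermat, pdersc])
  refine (((hasDerivAt_dotProduct_mulVec hA_comp hp).const_mul (1 / 2)).add
    (hasDerivAt_comp_gradVec hf hx)).congr_deriv ?_
  have hswap : p t ⬝ᵥ (A (x t) *ᵥ p') = p' ⬝ᵥ (A (x t) *ᵥ p t) := by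
    rw [← dotProduct_transpose_mulVec, hA_symm.eq]
  have hsum_form : 1 / 2 * p t ⬝ᵥ ((∑ i, x' i • pdermat i A (x t)) *ᵥ p t)
      = ∑ i, x' i * (1 / 2 * p t ⬝ᵥ (pdermat i A (x t) *ᵥ p t)) := by
    simp only [sum_mulVec, dotProduct_sum, smul_mulVec, dotProduct_smul, smul_eq_mul,
      Finset.mul_sum, mul_left_comm]
  rw [mul_add, mul_add, hswap, hsum_form]
  simp only [mul_add, Finset.sum_add_distrib]
  change _ + ∑ i, x' i * pdersc i f (x t) = _
  ring

theorem hasDerivAt_hamiltonian_comp_of_forced {c : ℝ} {φ : Fin d → ℝ}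
    (hA : ∀ j k, DifferentiableAt ℝ (fun z => A z j k) (x t)) (hA_symm : (A (x t)).IsSymm)
    (hf : DifferentiableAt ℝ f (x t)) (hx : HasDerivAt x (A (x t) *ᵥ p t) t)
    (hp : HasDerivAt p p' t)
    (hp' : ∀ i, p' i = -(1 / 2) * p t ⬝ᵥ (pdermat i A (x t) *ᵥ p t) - pdersc i f (x t)
      - c * φ i) :
    HasDerivAt (fun s => 1 / 2 * p s ⬝ᵥ (A (x s) *ᵥ p s) + f (x s))
      (-c * (A (x t) *ᵥ p t ⬝ᵥ φ)) t := by
  refine (hasDerivAt_hamiltonian_comp hA hA_symm hf hx hp).congr_deriv ?_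
  rw [dotProduct_comm, dotProduct, dotProduct, ← Finset.sum_add_distrib, Finset.mul_sum]
  refine Finset.sum_congr rfl fun i _ => ?_
  rw [hp' i]
  ring

end Hamiltonian

theorem gronwall_energy_bound_wong_zakai_general
    (d : ℕ) (T η : ℝ)
    (g : (Fin d → ℝ) → Matrix (Fin d) (Fin d) ℝ)
    (hg : ∀ j k : Fin d, ContDiff ℝ 1 fun y => g y j k)
    (hgpos : ∀ y, (g y).PosDef)
    (f σ : (Fin d → ℝ) → ℝ) (hf : ContDiff ℝ 1 f)
    (w : ℝ → ℝ) (hw : ContinuousOn w (Set.Icc 0 T))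
    (x p : ℝ → Fin d → ℝ) (hx : ContDiff ℝ 1 x) (hp : ContDiff ℝ 1 p)
    (hode : ∀ t ∈ Set.Icc (0 : ℝ) T,
      deriv x t = (g (x t))⁻¹.mulVec (p t) ∧
      ∀ i : Fin d,
        deriv (fun s => p s i) t
          = -(1 / 2) * dotProduct (p t)
              ((pdermat i (fun z => (g z)⁻¹) (x t)).mulVec (p t))
            - pdersc i f (x t) - η * w t * pdersc i σ (x t))
    (C₁ c₁ : ℝ) (hC₁ : 0 < C₁) (hc₁ : 0 < c₁)
    (hgrowth : ∀ y q : Fin d → ℝ,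
      |dotProduct ((g y)⁻¹.mulVec q) (gradVec σ y)| ≤ C₁ + c₁ * mechHam g f y q) :
    ∀ t ∈ Set.Icc (0 : ℝ) T,
      mechHam g f (x t) (p t)
        ≤ (mechHam g f (x 0) (p 0) + |η| * C₁ * ∫ s in (0 : ℝ)..t, |w s|)
            * Real.exp (c₁ * |η| * ∫ s in (0 : ℝ)..t, |w s|) := by
  have hdet : ∀ y, (g y).det ≠ 0 := fun y => (hgpos y).det_pos.ne'
  have henergy : ∀ t ∈ Icc 0 T, HasDerivAt (fun s => mechHam g f (x s) (p s))
      (-(η * w t) * ((g (x t))⁻¹ *ᵥ p t ⬝ᵥ gradVec σ (x t))) t := by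
    intro t ht
    obtain ⟨hx', hp'⟩ := hode t ht
    have hp_apply : ∀ i, HasDerivAt (fun s => p s i) (deriv (fun s => p s i) t) t := fun i =>
      (differentiableAt_pi.mp (hp.differentiable one_ne_zero t) i).hasDerivAt
    refine hasDerivAt_hamiltonian_comp_of_forced (A := fun z => (g z)⁻¹)
      (fun j k => (contDiff_inv_apply hg hdet j k).differentiable one_ne_zero _)
      (isHermitian_iff_isSymm.mp (hgpos (x t)).inv.isHermitian)
      (hf.differentiable one_ne_zero _)
      (hx' ▸ (hx.differentiable one_ne_zero t).hasDerivAt) (hasDerivAt_pi.mpr hp_apply) hp'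
  refine le_mul_exp_integral_of_hasDerivAt_le (mul_nonneg (abs_nonneg η) hC₁.le)
    (mul_nonneg hc₁.le (abs_nonneg η)) hw.abs (fun _ _ => abs_nonneg _)
    (fun t ht => (henergy t ht).continuousAt.continuousWithinAt)
    (fun t ht => henergy t (Ioo_subset_Icc_self ht)) fun t _ => ?_
  calc -(η * w t) * ((g (x t))⁻¹ *ᵥ p t ⬝ᵥ gradVec σ (x t))
      ≤ |η * w t| * |(g (x t))⁻¹ *ᵥ p t ⬝ᵥ gradVec σ (x t)| := by
        rw [← abs_mul, neg_mul]; exact neg_le_abs _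
    _ ≤ |η * w t| * (C₁ + c₁ * mechHam g f (x t) (p t)) := by gcongr; exact hgrowth _ _
    _ = |w t| * (|η| * C₁ + c₁ * |η| * mechHam g f (x t) (p t)) := by rw [abs_mul]; ring

/-- **Grönwall bound for the energy under the growth condition.**
If `(x, p)` is a `C¹` solution on `[0,T]` of the perturbed Hamiltonian system
`x' = g(x)⁻¹ p`, `pᵢ' = −½⟨p, ∂ᵢ(g⁻¹)(x) p⟩ − ∂ᵢf(x) − η w ∂ᵢσ(x)`, the energy `H₀ ≥ 0`,
and `|⟨g(y)⁻¹ q, ∇σ(y)⟩| ≤ C₁ + c₁ H₀(y, q)` for all `(y, q)`, then for all `t ∈ [0,T]`,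
`H₀(x(t), p(t)) ≤ (H₀(x(0), p(0)) + |η| C₁ ∫₀ᵗ |w|) · exp(c₁ |η| ∫₀ᵗ |w|)`. -/
theorem gronwall_energy_bound_wong_zakai
    (d : ℕ) (T η : ℝ) (hT : 0 < T)
    (g : (Fin d → ℝ) → Matrix (Fin d) (Fin d) ℝ)
    (hg : ∀ j k : Fin d, ContDiff ℝ 1 fun y => g y j k)
    (hgsymm : ∀ y, (g y).IsSymm) (hgpos : ∀ y, (g y).PosDef)
    (f σ : (Fin d → ℝ) → ℝ) (hf : ContDiff ℝ 1 f) (hσ : ContDiff ℝ 1 σ)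
    (w : ℝ → ℝ) (hw : ContinuousOn w (Set.Icc 0 T))
    (x p : ℝ → Fin d → ℝ) (hx : ContDiff ℝ 1 x) (hp : ContDiff ℝ 1 p)
    (hode : ∀ t ∈ Set.Icc (0 : ℝ) T,
      deriv x t = (g (x t))⁻¹.mulVec (p t) ∧
      ∀ i : Fin d,
        deriv (fun s => p s i) t
          = -(1 / 2) * dotProduct (p t)
              ((pdermat i (fun z => (g z)⁻¹) (x t)).mulVec (p t))
            - pdersc i f (x t) - η * w t * pdersc i σ (x t))
    (hH₀nonneg : ∀ y q : Fin d → ℝ, 0 ≤ mechHam g f y q)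
    (C₁ c₁ : ℝ) (hC₁ : 0 < C₁) (hc₁ : 0 < c₁)
    (hgrowth : ∀ y q : Fin d → ℝ,
      |dotProduct ((g y)⁻¹.mulVec q) (gradVec σ y)| ≤ C₁ + c₁ * mechHam g f y q) :
    ∀ t ∈ Set.Icc (0 : ℝ) T,
      mechHam g f (x t) (p t)
        ≤ (mechHam g f (x 0) (p 0) + |η| * C₁ * ∫ s in (0 : ℝ)..t, |w s|)
            * Real.exp (c₁ * |η| * ∫ s in (0 : ℝ)..t, |w s|) :=
  gronwall_energy_bound_wong_zakai_general d T η g hg hgpos f σ hf w hw x p hx hp hode C₁ c₁ hC₁ hc₁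
    hgrowth
end

section
/- Madelung transform of the Madelung system solves the Wong–Zakai nonlinear Schrödinger equation (first direction of Proposition 4.1): Let d ∈ ℕ, T > 0, λ ∈ ℝ, let f : ℝ → ℝ be continuous, let W : [0,T] × ℝ^d → ℝ be continuous, and let ρ, S : [0,T] × ℝ^d → ℝ be C¹ in t and C² in x with ρ(t,x) > 0 for all (t,x). Define u(t,x) := √(ρ(t,x)) e^{i S(t,x)}. If ∂_t ρ = −2 ∇·(ρ ∇S) and ∂_t S = −|∇S|² + Δρ/(2ρ) − |∇ρ|²/(4ρ²) + λ f(ρ) + W(t,x) hold at every point of [0,T] × ℝ^d, then u satisfies ∂_t u = i Δ_x u + i λ f(|u|²) u + i u W(t,x) at every point of [0,T] × ℝ^d. -/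
open scoped RealInnerProductSpace

/-- The spatial Laplacian of a real-valued function on `ℝ^d`. -/
noncomputable def lapR {d : ℕ} (ψ : EuclideanSpace ℝ (Fin d) → ℝ)
    (x : EuclideanSpace ℝ (Fin d)) : ℝ :=
  ∑ i, fderiv ℝ (fun y => fderiv ℝ ψ y (EuclideanSpace.single i 1)) x (EuclideanSpace.single i 1)

/-- The spatial Laplacian of a complex-valued function on `ℝ^d`. -/
noncomputable def lapC {d : ℕ} (ψ : EuclideanSpace ℝ (Fin d) → ℂ)
    (x : EuclideanSpace ℝ (Fin d)) : ℂ :=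
  ∑ i, fderiv ℝ (fun y => fderiv ℝ ψ y (EuclideanSpace.single i 1)) x (EuclideanSpace.single i 1)

/-- The divergence of a vector field on `ℝ^d`. -/
noncomputable def divg {d : ℕ}
    (V : EuclideanSpace ℝ (Fin d) → EuclideanSpace ℝ (Fin d))
    (x : EuclideanSpace ℝ (Fin d)) : ℝ :=
  ∑ i, fderiv ℝ (fun y => V y i) x (EuclideanSpace.single i 1)

/-- The Madelung transform `u = √ρ e^{iS}` of the pair `(ρ, S)`. -/
noncomputable def madelung {d : ℕ} (ρ S : ℝ → EuclideanSpace ℝ (Fin d) → ℝ)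
    (t : ℝ) (x : EuclideanSpace ℝ (Fin d)) : ℂ :=
  (Real.sqrt (ρ t x) : ℂ) * Complex.exp (Complex.I * (S t x : ℂ))

/-! With `a = √ρ`, the product and chain rules give `∂ₜu = (∂ₜρ / (2a) + i a ∂ₜS) e^{iS}` and
`Δu = (Δa + 2i ∇a·∇S + i a ΔS - a |∇S|²) e^{iS}`. Since `ρ = a²`, the quantum potential
`Δρ/(2ρ) - |∇ρ|²/(4ρ²)` collapses to `Δa / a` and the continuity equation reads
`∂ₜρ / (2a) = -2 ∇a·∇S - a ΔS`; substituting both equations of the Madelung system, the two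
sides of the Schrödinger equation agree term by term. -/

open Complex

open scoped Gradient

section DirectionalDerivatives

variable {E F 𝔸 : Type*} [NormedAddCommGroup E] [NormedSpace ℝ E]
  [NormedAddCommGroup F] [NormedSpace ℝ F] [NormedCommRing 𝔸] [NormedAlgebra ℝ 𝔸]

theorem ContDiff.differentiable_fderiv_apply {f : E → F} (hf : ContDiff ℝ 2 f) (v : E) :
    Differentiable ℝ fun y => fderiv ℝ f y v :=
  ((hf.fderiv_right (by norm_num)).clm_apply contDiff_const).differentiable one_ne_zero

theorem fderiv_mul_apply {f g : E → 𝔸} {x : E} (hf : DifferentiableAt ℝ f x)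
    (hg : DifferentiableAt ℝ g x) (v : E) :
    fderiv ℝ (fun y => f y * g y) x v = fderiv ℝ f x v * g x + f x * fderiv ℝ g x v := by
  rw [fderiv_fun_mul hf hg]
  simp only [add_apply, smul_apply, smul_eq_mul]
  ring

theorem fderiv_fderiv_mul_apply {f g : E → 𝔸} (hf : ContDiff ℝ 2 f) (hg : ContDiff ℝ 2 g)
    (x v : E) :
    fderiv ℝ (fun y => fderiv ℝ (fun z => f z * g z) y v) x v
      = fderiv ℝ (fun y => fderiv ℝ f y v) x v * g x + 2 * (fderiv ℝ f x v * fderiv ℝ g x v)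
        + f x * fderiv ℝ (fun y => fderiv ℝ g y v) x v := by
  have hf₁ := hf.differentiable (by norm_num)
  have hg₁ := hg.differentiable (by norm_num)
  have hf₂ := hf.differentiable_fderiv_apply v
  have hg₂ := hg.differentiable_fderiv_apply v
  have h : (fun y => fderiv ℝ (fun z => f z * g z) y v)
      = fun y => fderiv ℝ f y v * g y + f y * fderiv ℝ g y v :=
    funext fun y => fderiv_mul_apply (hf₁ y) (hg₁ y) v
  rw [h, fderiv_fun_add (by fun_prop) (by fun_prop), add_apply,
    fderiv_mul_apply (hf₂ x) (hg₁ x), fderiv_mul_apply (hf₁ x) (hg₂ x)]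
  ring

theorem fderiv_ofReal_apply (f : E → ℝ) (x v : E) :
    fderiv ℝ (fun y => (f y : ℂ)) x v = fderiv ℝ f x v := by
  by_cases hf : DifferentiableAt ℝ f x
  · have h : HasFDerivAt (fun y => (f y : ℂ)) (ofRealCLM.comp (fderiv ℝ f x)) x :=
      ofRealCLM.hasFDerivAt.comp x hf.hasFDerivAt
    rw [h.fderiv]
    rfl
  · have hfC : ¬DifferentiableAt ℝ (fun y => (f y : ℂ)) x := fun h => by
      have hre : DifferentiableAt ℝ (fun y => re (f y : ℂ)) x := reCLM.differentiableAt.comp x h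
      simp only [ofReal_re] at hre
      exact hf hre
    rw [fderiv_zero_of_not_differentiableAt hf, fderiv_zero_of_not_differentiableAt hfC]
    simp

theorem fderiv_cexp_I_mul_apply {S : E → ℝ} {x : E} (hS : DifferentiableAt ℝ S x) (v : E) :
    fderiv ℝ (fun y => cexp (I * S y)) x v = I * fderiv ℝ S x v * cexp (I * S x) := by
  have hSC : HasFDerivAt (fun y => (S y : ℂ)) (ofRealCLM.comp (fderiv ℝ S x)) x :=
    ofRealCLM.hasFDerivAt.comp x hS.hasFDerivAt
  rw [(hSC.const_mul I).cexp.fderiv]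
  simp only [smul_apply, ContinuousLinearMap.coe_comp, Function.comp_apply,
    ofRealCLM_apply, smul_eq_mul]
  ring

theorem fderiv_fderiv_cexp_I_mul_apply {S : E → ℝ} (hS : ContDiff ℝ 2 S) (x v : E) :
    fderiv ℝ (fun y => fderiv ℝ (fun z => cexp (I * S z)) y v) x v
      = (I * fderiv ℝ (fun y => fderiv ℝ S y v) x v - fderiv ℝ S x v ^ 2) * cexp (I * S x) := by
  have hS₁ := hS.differentiable (by norm_num)
  have h : (fun y => fderiv ℝ (fun z => cexp (I * S z)) y v)
      = fun y => I * (fderiv ℝ S y v : ℂ) * cexp (I * S y) :=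
    funext fun y => fderiv_cexp_I_mul_apply (hS₁ y) v
  have hS₂ : DifferentiableAt ℝ (fun y => (fderiv ℝ S y v : ℂ)) x :=
    ofRealCLM.differentiable.comp (hS.differentiable_fderiv_apply v) x
  have hexp : DifferentiableAt ℝ (fun y => cexp (I * S y)) x :=
    ((ofRealCLM.differentiable.comp hS₁) x).const_mul I |>.cexp
  rw [h, fderiv_mul_apply (hS₂.const_mul I) hexp, fderiv_const_mul hS₂, smul_apply, smul_eq_mul,
    fderiv_ofReal_apply, fderiv_cexp_I_mul_apply (hS₁ x)]
  linear_combination (↑(fderiv ℝ S x v) ^ 2 * cexp (I * S x)) * I_sq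

end DirectionalDerivatives

section EuclideanCalculus

variable {d : ℕ}

theorem gradient_apply_single (f : EuclideanSpace ℝ (Fin d) → ℝ) (x : EuclideanSpace ℝ (Fin d))
    (i : Fin d) : ∇ f x i = fderiv ℝ f x (EuclideanSpace.single i 1) := by
  rw [← inner_gradient_left, EuclideanSpace.inner_single_right]
  simp

theorem inner_gradient_eq_sum (f g : EuclideanSpace ℝ (Fin d) → ℝ)
    (x : EuclideanSpace ℝ (Fin d)) :
    ⟪∇ f x, ∇ g x⟫ = ∑ i, fderiv ℝ f x (EuclideanSpace.single i 1)
      * fderiv ℝ g x (EuclideanSpace.single i 1) := by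
  simp only [PiLp.inner_apply, gradient_apply_single, RCLike.inner_apply, conj_trivial]
  exact Finset.sum_congr rfl fun i _ => mul_comm _ _

theorem gradient_mul {f g : EuclideanSpace ℝ (Fin d) → ℝ} {x : EuclideanSpace ℝ (Fin d)}
    (hf : DifferentiableAt ℝ f x) (hg : DifferentiableAt ℝ g x) :
    ∇ (fun y => f y * g y) x = f x • ∇ g x + g x • ∇ f x := by
  simp [gradient, fderiv_fun_mul hf hg]

theorem lapR_mul {f g : EuclideanSpace ℝ (Fin d) → ℝ} (hf : ContDiff ℝ 2 f)
    (hg : ContDiff ℝ 2 g) (x : EuclideanSpace ℝ (Fin d)) :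
    lapR (fun y => f y * g y) x = lapR f x * g x + 2 * ⟪∇ f x, ∇ g x⟫ + f x * lapR g x := by
  simp only [lapR, fderiv_fderiv_mul_apply hf hg, inner_gradient_eq_sum, Finset.sum_add_distrib,
    Finset.sum_mul, Finset.mul_sum]

theorem divg_smul_gradient {p q : EuclideanSpace ℝ (Fin d) → ℝ} {x : EuclideanSpace ℝ (Fin d)}
    (hp : DifferentiableAt ℝ p x) (hq : ContDiff ℝ 2 q) :
    divg (fun y => p y • ∇ q y) x = ⟪∇ p x, ∇ q x⟫ + p x * lapR q x := by
  simp only [divg, PiLp.smul_apply, gradient_apply_single, smul_eq_mul,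
    fderiv_mul_apply hp ((hq.differentiable_fderiv_apply _) x), inner_gradient_eq_sum,
    lapR, Finset.sum_add_distrib, Finset.mul_sum]

theorem lapC_ofReal_mul_cexp {a S : EuclideanSpace ℝ (Fin d) → ℝ} (ha : ContDiff ℝ 2 a)
    (hS : ContDiff ℝ 2 S) (x : EuclideanSpace ℝ (Fin d)) :
    lapC (fun y => (a y : ℂ) * cexp (I * S y)) x
      = (lapR a x + 2 * I * ⟪∇ a x, ∇ S x⟫ + I * a x * lapR S x - a x * ‖∇ S x‖ ^ 2)
        * cexp (I * S x) := by
  have haC : ContDiff ℝ 2 fun y => (a y : ℂ) := ofRealCLM.contDiff.comp ha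
  have hexp : ContDiff ℝ 2 fun y => cexp (I * S y) :=
    (contDiff_const.mul (ofRealCLM.contDiff.comp hS)).cexp
  rw [← ofReal_pow, ← real_inner_self_eq_norm_sq]
  simp only [lapC, fderiv_fderiv_mul_apply haC hexp, fderiv_ofReal_apply,
    fderiv_fderiv_cexp_I_mul_apply hS,
    fderiv_cexp_I_mul_apply ((hS.differentiable (by norm_num)) x), lapR, inner_gradient_eq_sum,
    ofReal_sum, ofReal_mul, Finset.mul_sum, Finset.sum_mul,
    ← Finset.sum_add_distrib, ← Finset.sum_sub_distrib]
  exact Finset.sum_congr rfl fun i _ => by ring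

end EuclideanCalculus

theorem hasDerivAt_ofReal_sqrt_mul_cexp {r s : ℝ → ℝ} {t r' s' : ℝ} (hr : HasDerivAt r r' t)
    (hs : HasDerivAt s s' t) (hpos : r t ≠ 0) :
    HasDerivAt (fun τ => (√(r τ) : ℂ) * cexp (I * s τ))
      ((↑(r' / (2 * √(r t))) + I * √(r t) * s') * cexp (I * s t)) t := by
  refine ((hr.sqrt hpos).ofReal_comp.mul (hs.ofReal_comp.const_mul I).cexp).congr_deriv ?_
  ring

theorem norm_madelung_sq {d : ℕ} {ρ S : ℝ → EuclideanSpace ℝ (Fin d) → ℝ} {t : ℝ}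
    {x : EuclideanSpace ℝ (Fin d)} (h : 0 ≤ ρ t x) : ‖madelung ρ S t x‖ ^ 2 = ρ t x := by
  rw [madelung, norm_mul, norm_exp_I_mul_ofReal, mul_one, norm_real, Real.norm_eq_abs,
    sq_abs, Real.sq_sqrt h]

theorem madelung_solves_wong_zakai_nls_general
    (d : ℕ) (T lam : ℝ)
    (f : ℝ → ℝ)
    (W : ℝ → EuclideanSpace ℝ (Fin d) → ℝ)
    (ρ S : ℝ → EuclideanSpace ℝ (Fin d) → ℝ)
    (hρt : ∀ x, ContDiff ℝ 1 fun t => ρ t x) (hρx : ∀ t, ContDiff ℝ 2 (ρ t))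
    (hSt : ∀ x, ContDiff ℝ 1 fun t => S t x) (hSx : ∀ t, ContDiff ℝ 2 (S t))
    (hρpos : ∀ t x, 0 < ρ t x)
    (hcontinuity : ∀ t ∈ Set.Icc (0 : ℝ) T, ∀ x,
      deriv (fun s => ρ s x) t
        = -2 * divg (fun y => ρ t y • gradient (S t) y) x)
    (hHJ : ∀ t ∈ Set.Icc (0 : ℝ) T, ∀ x,
      deriv (fun s => S s x) t
        = -‖gradient (S t) x‖ ^ 2 + lapR (ρ t) x / (2 * ρ t x)
          - ‖gradient (ρ t) x‖ ^ 2 / (4 * (ρ t x) ^ 2) + lam * f (ρ t x) + W t x) :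
    ∀ t ∈ Set.Icc (0 : ℝ) T, ∀ x,
      deriv (fun s => madelung ρ S s x) t
        = Complex.I * lapC (fun y => madelung ρ S t y) x
          + Complex.I * (lam : ℂ) * (f (‖madelung ρ S t x‖ ^ 2) : ℂ) * madelung ρ S t x
          + Complex.I * madelung ρ S t x * (W t x : ℂ) := by
  intro t ht x
  set a : EuclideanSpace ℝ (Fin d) → ℝ := fun y => √(ρ t y)
  have ha : ContDiff ℝ 2 a := contDiff_iff_contDiffAt.2 fun y =>
    (Real.contDiffAt_sqrt (hρpos t y).ne').comp y (hρx t).contDiffAt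
  have hρa : ρ t = fun y => a y * a y :=
    funext fun y => (Real.mul_self_sqrt (hρpos t y).le).symm
  have ha₀ : (a x : ℂ) ≠ 0 := ofReal_ne_zero.2 (Real.sqrt_pos.2 (hρpos t x)).ne'
  have hax := (ha.differentiable (by norm_num)) x
  have hgrad : ∇ (ρ t) x = (2 * a x) • ∇ a x := by
    rw [hρa, gradient_mul hax hax]
    module
  have hlap : lapR (ρ t) x = 2 * a x * lapR a x + 2 * ‖∇ a x‖ ^ 2 := by
    rw [hρa, lapR_mul ha ha, real_inner_self_eq_norm_sq]
    ring
  have hdt := hasDerivAt_ofReal_sqrt_mul_cexp ((hρt x).differentiable one_ne_zero t).hasDerivAt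
    ((hSt x).differentiable one_ne_zero t).hasDerivAt (hρpos t x).ne'
  rw [show deriv (fun s => madelung ρ S s x) t = _ from hdt.deriv,
    show (fun y => madelung ρ S t y) = fun y => (a y : ℂ) * cexp (I * S t y) from rfl,
    lapC_ofReal_mul_cexp ha (hSx t), norm_madelung_sq (hρpos t x).le, madelung,
    hcontinuity t ht x, hHJ t ht x,
    divg_smul_gradient ((hρx t).differentiable (by norm_num) x) (hSx t), hgrad, hlap,
    inner_smul_left, norm_smul, conj_trivial, mul_pow, Real.norm_eq_abs, sq_abs,
    show √(ρ t x) = a x from rfl, show ρ t x = a x * a x from congrFun hρa x]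
  push_cast
  field_simp
  linear_combination
    (-8 * ↑(a x) * ↑⟪∇ a x, ∇ (S t) x⟫ - 4 * ↑(a x) ^ 2 * ↑(lapR (S t) x)) * I_sq

/-- **Madelung transform of the Madelung system solves the Wong–Zakai nonlinear Schrödinger
equation (first direction of Proposition 4.1).**  If `(ρ, S)` (with `ρ > 0`, `C¹` in time and
`C²` in space) solves the Madelung system
`∂ₜρ = −2∇·(ρ∇S)`, `∂ₜS = −|∇S|² + Δρ/(2ρ) − |∇ρ|²/(4ρ²) + λ f(ρ) + W`,
then `u = √ρ e^{iS}` solves `∂ₜu = iΔu + iλ f(|u|²) u + i u W` on `[0,T] × ℝ^d`. -/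
theorem madelung_solves_wong_zakai_nls
    (d : ℕ) (T lam : ℝ) (hT : 0 < T)
    (f : ℝ → ℝ) (hf : Continuous f)
    (W : ℝ → EuclideanSpace ℝ (Fin d) → ℝ)
    (hW : Continuous fun q : ℝ × EuclideanSpace ℝ (Fin d) => W q.1 q.2)
    (ρ S : ℝ → EuclideanSpace ℝ (Fin d) → ℝ)
    (hρt : ∀ x, ContDiff ℝ 1 fun t => ρ t x) (hρx : ∀ t, ContDiff ℝ 2 (ρ t))
    (hSt : ∀ x, ContDiff ℝ 1 fun t => S t x) (hSx : ∀ t, ContDiff ℝ 2 (S t))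
    (hρpos : ∀ t x, 0 < ρ t x)
    (hcontinuity : ∀ t ∈ Set.Icc (0 : ℝ) T, ∀ x,
      deriv (fun s => ρ s x) t
        = -2 * divg (fun y => ρ t y • gradient (S t) y) x)
    (hHJ : ∀ t ∈ Set.Icc (0 : ℝ) T, ∀ x,
      deriv (fun s => S s x) t
        = -‖gradient (S t) x‖ ^ 2 + lapR (ρ t) x / (2 * ρ t x)
          - ‖gradient (ρ t) x‖ ^ 2 / (4 * (ρ t x) ^ 2) + lam * f (ρ t x) + W t x) :
    ∀ t ∈ Set.Icc (0 : ℝ) T, ∀ x,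
      deriv (fun s => madelung ρ S s x) t
        = Complex.I * lapC (fun y => madelung ρ S t y) x
          + Complex.I * (lam : ℂ) * (f (‖madelung ρ S t x‖ ^ 2) : ℂ) * madelung ρ S t x
          + Complex.I * madelung ρ S t x * (W t x : ℂ) :=
  madelung_solves_wong_zakai_nls_general d T lam f W ρ S hρt hρx hSt hSx hρpos hcontinuity hHJ
end
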